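/- Let F_q be a finite field, k a positive integer, F = (F_1, …, F_{2k−1}) a full flag on F_q^{2k}, and T a subgroup of GL(2k, q). Suppose that any two distinct subspaces in Orb_T(F_k) intersect trivially and that Stab_T(F_k) is the trivial subgroup {I_{2k}}. Then Orb_T(F) is an optimum distance full flag code: any two distinct flags in Orb_T(F) have flag distance exactly 2k². -/

import Mathlib

/-!
Write `U = A·F_k` and `W = B·F_k` for two distinct flags `A·F`, `B·F` of the orbit. Since the
stabilizer of `F_k` in `T` is trivial, `A ≠ B` forces `U ≠ W`, so `U ∩ W = 0`, and as
`dim U = dim W = k` the two subspaces are complementary in `F_q^{2k}`. For `i ≤ k` the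
subspaces `A·F_i ⊆ U` and `B·F_i ⊆ W` still meet trivially, so their distance is `2i`; for
`i ≥ k` they contain `U` and `W`, hence span the whole space, and their distance is
`2(2k - i)`. Summing `2 min(i, 2k - i)` over `1 ≤ i ≤ 2k - 1` gives `2k²`.
-/

open Module

/-- The action of `A ∈ GL(n, F)` on subspaces of `F^n`: `U · A` is the image of `U`
under the invertible linear map given by the matrix `A`. -/
noncomputable def mapGL {F : Type*} [Field F] {n : ℕ}
    (A : GL (Fin n) F) (U : Submodule F (Fin n → F)) : Submodule F (Fin n → F) :=
  U.map (Matrix.toLin' (A : Matrix (Fin n) (Fin n) F))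

/-- The subspace distance `d_S(U, W) = dim U + dim W − 2 dim(U ∩ W)`. -/
noncomputable def subspaceDist {F V : Type*} [Field F] [AddCommGroup V] [Module F V]
    (U W : Submodule F V) : ℕ :=
  finrank F U + finrank F W - 2 * finrank F ↥(U ⊓ W)

section SubspaceDist

variable {F V : Type*} [Field F] [AddCommGroup V] [Module F V]

lemma subspaceDist_of_disjoint {U W : Submodule F V} (h : Disjoint U W) :
    subspaceDist U W = finrank F U + finrank F W := by
  rw [subspaceDist, h.eq_bot, finrank_bot, mul_zero, Nat.sub_zero]

lemma subspaceDist_of_codisjoint [FiniteDimensional F V] {U W : Submodule F V}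
    (h : Codisjoint U W) :
    subspaceDist U W = 2 * finrank F V - finrank F U - finrank F W := by
  have hdim := Submodule.finrank_sup_add_finrank_inf_eq U W
  rw [h.eq_top, finrank_top] at hdim
  rw [subspaceDist]
  omega

end SubspaceDist

section MapGL

variable {F : Type*} [Field F] {n : ℕ}

lemma finrank_mapGL (A : GL (Fin n) F) (U : Submodule F (Fin n → F)) :
    finrank F (mapGL A U) = finrank F U :=
  (Matrix.GeneralLinearGroup.toLin A).toLinearEquiv.finrank_map_eq U

lemma mapGL_mono (A : GL (Fin n) F) {U W : Submodule F (Fin n → F)} (h : U ≤ W) :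
    mapGL A U ≤ mapGL A W :=
  Submodule.map_mono h

lemma mapGL_mul (A B : GL (Fin n) F) (U : Submodule F (Fin n → F)) :
    mapGL (A * B) U = mapGL A (mapGL B U) := by
  simp only [mapGL, Units.val_mul, Matrix.toLin'_mul, Submodule.map_comp]

lemma mapGL_one (U : Submodule F (Fin n → F)) : mapGL (1 : GL (Fin n) F) U = U := by
  simp only [mapGL, Units.val_one, Matrix.toLin'_one, Submodule.map_id]

lemma eq_of_mapGL_eq {T : Subgroup (GL (Fin n) F)} {U : Submodule F (Fin n → F)}
    (hstab : ∀ A ∈ T, mapGL A U = U → A = 1) {A B : GL (Fin n) F}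
    (hA : A ∈ T) (hB : B ∈ T) (h : mapGL A U = mapGL B U) : A = B := by
  have hfix : mapGL (B⁻¹ * A) U = U := by
    rw [mapGL_mul, h, ← mapGL_mul, inv_mul_cancel, mapGL_one]
  exact (inv_mul_eq_one.mp (hstab _ (T.mul_mem (T.inv_mem hB) hA) hfix)).symm

variable {A B : GL (Fin n) F} {P Q : Submodule F (Fin n → F)}

lemma subspaceDist_mapGL_of_le (hcompl : IsCompl (mapGL A Q) (mapGL B Q)) (hPQ : P ≤ Q) :
    subspaceDist (mapGL A P) (mapGL B P) = 2 * finrank F P := by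
  rw [subspaceDist_of_disjoint (hcompl.disjoint.mono (mapGL_mono A hPQ) (mapGL_mono B hPQ)),
    finrank_mapGL, finrank_mapGL, two_mul]

lemma subspaceDist_mapGL_of_ge (hcompl : IsCompl (mapGL A Q) (mapGL B Q)) (hQP : Q ≤ P) :
    subspaceDist (mapGL A P) (mapGL B P) = 2 * (n - finrank F P) := by
  rw [subspaceDist_of_codisjoint
      (hcompl.codisjoint.mono (mapGL_mono A hQP) (mapGL_mono B hQP)),
    finrank_mapGL, finrank_mapGL, finrank_fin_fun]
  omega

end MapGL

lemma sum_range_min_two_mul_sub_eq_sq (k : ℕ) :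
    ∑ i ∈ Finset.range (2 * k), min i (2 * k - i) = k ^ 2 := by
  induction k with
  | zero => simp
  | succ k ih =>
    -- besides the terms `i = 0` (zero) and `i = 2k + 1` (one), the term `i + 1` exceeds the
    -- term `i` of the sum for `k` by one
    have hshift : ∀ i ∈ Finset.range (2 * k),
        min (i + 1) (2 * k + 2 - (i + 1)) = min i (2 * k - i) + 1 := by
      intro i hi
      rw [Finset.mem_range] at hi
      omega
    rw [Nat.mul_succ, Finset.sum_range_succ', Finset.sum_range_succ, Finset.sum_congr rfl hshift,
      Finset.sum_add_distrib, ih, Finset.sum_const, Finset.card_range, smul_eq_mul, Nat.zero_min,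
      show min (2 * k + 1) (2 * k + 2 - (2 * k + 1)) = 1 by omega]
    ring

lemma sum_fin_two_mul_min_eq_two_mul_sq (k : ℕ) :
    ∑ j : Fin (2 * k - 1), 2 * min (j.val + 1) (2 * k - (j.val + 1)) = 2 * k ^ 2 := by
  rcases Nat.eq_zero_or_pos k with rfl | hk
  · simp
  rw [← Finset.mul_sum, ← sum_range_min_two_mul_sub_eq_sq k,
    Finset.sum_range_eq_add_Ico _ (by omega), Finset.sum_Ico_eq_sum_range,
    Fin.sum_univ_eq_sum_range (fun j => min (j + 1) (2 * k - (j + 1)))]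
  simp only [Nat.zero_min, zero_add, add_comm 1]

lemma subspaceDist_mapGL_flag {F : Type*} [Field F] {k : ℕ} (hk : 0 < k)
    {Fl : ℕ → Submodule F (Fin (2 * k) → F)}
    (hdim : ∀ i, 1 ≤ i → i ≤ 2 * k - 1 → finrank F (Fl i) = i)
    (hmono : ∀ i j, 1 ≤ i → i < j → j ≤ 2 * k - 1 → Fl i < Fl j)
    {A B : GL (Fin (2 * k)) F} (hcompl : IsCompl (mapGL A (Fl k)) (mapGL B (Fl k)))
    {i : ℕ} (hi : 1 ≤ i) (hi' : i ≤ 2 * k - 1) :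
    subspaceDist (mapGL A (Fl i)) (mapGL B (Fl i)) = 2 * min i (2 * k - i) := by
  rcases lt_trichotomy i k with hlt | rfl | hgt
  · rw [subspaceDist_mapGL_of_le hcompl (hmono i k hi hlt (by omega)).le, hdim i hi hi']
    omega
  · rw [subspaceDist_mapGL_of_le hcompl le_rfl, hdim i hi hi']
    omega
  · rw [subspaceDist_mapGL_of_ge hcompl (hmono k i hk hgt hi').le, hdim i hi hi']
    omega

theorem orbit_flag_code_optimum_distance_of_trivial_stabilizer_general
    {F : Type*} [Field F] {k : ℕ} (hk : 0 < k)
    (Fl : ℕ → Submodule F (Fin (2 * k) → F))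
    (hdim : ∀ i, 1 ≤ i → i ≤ 2 * k - 1 → finrank F (Fl i) = i)
    (hmono : ∀ i j, 1 ≤ i → i < j → j ≤ 2 * k - 1 → Fl i < Fl j)
    (T : Subgroup (GL (Fin (2 * k)) F))
    (hmax : ∀ A ∈ T, ∀ B ∈ T,
      mapGL A (Fl k) ≠ mapGL B (Fl k) → mapGL A (Fl k) ⊓ mapGL B (Fl k) = ⊥)
    (hstab : ∀ A ∈ T, mapGL A (Fl k) = Fl k → A = 1) :
    ∀ G ∈ {G : Fin (2 * k - 1) → Submodule F (Fin (2 * k) → F) |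
        ∃ A ∈ T, G = fun j => mapGL A (Fl (j.val + 1))},
    ∀ G' ∈ {G : Fin (2 * k - 1) → Submodule F (Fin (2 * k) → F) |
        ∃ A ∈ T, G = fun j => mapGL A (Fl (j.val + 1))},
      G ≠ G' → ∑ j : Fin (2 * k - 1), subspaceDist (G j) (G' j) = 2 * k ^ 2 := by
  rintro G ⟨A, hA, rfl⟩ G' ⟨B, hB, rfl⟩ hne
  have hAB : mapGL A (Fl k) ≠ mapGL B (Fl k) := fun h => hne (by
    rw [eq_of_mapGL_eq hstab hA hB h])
  have hdimk : finrank F (Fl k) = k := hdim k hk (by omega)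
  have hcompl : IsCompl (mapGL A (Fl k)) (mapGL B (Fl k)) := by
    refine (Submodule.isCompl_iff_disjoint _ _ ?_).mpr (disjoint_iff.mpr (hmax A hA B hB hAB))
    rw [finrank_mapGL, finrank_mapGL, hdimk, finrank_fin_fun]
    omega
  rw [← sum_fin_two_mul_min_eq_two_mul_sq k]
  exact Finset.sum_congr rfl fun j _ =>
    subspaceDist_mapGL_flag hk hdim hmono hcompl (by omega) (by omega)

/-- Let `F = (F_1, …, F_{2k−1})` be a full flag on `F_q^{2k}` and `T` a
subgroup of `GL(2k, q)` such that any two distinct subspaces in `Orb_T(F_k)` intersect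
trivially and `Stab_T(F_k)` is the trivial subgroup. Then any two distinct flags in the
orbit flag code `Orb_T(F)` are at flag distance exactly `2k²`. -/
theorem orbit_flag_code_optimum_distance_of_trivial_stabilizer
    {F : Type*} [Field F] [Fintype F] {k : ℕ} (hk : 0 < k)
    (Fl : ℕ → Submodule F (Fin (2 * k) → F))
    (hdim : ∀ i, 1 ≤ i → i ≤ 2 * k - 1 → finrank F (Fl i) = i)
    (hmono : ∀ i j, 1 ≤ i → i < j → j ≤ 2 * k - 1 → Fl i < Fl j)
    (T : Subgroup (GL (Fin (2 * k)) F))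
    (hmax : ∀ A ∈ T, ∀ B ∈ T,
      mapGL A (Fl k) ≠ mapGL B (Fl k) → mapGL A (Fl k) ⊓ mapGL B (Fl k) = ⊥)
    (hstab : ∀ A ∈ T, mapGL A (Fl k) = Fl k → A = 1) :
    ∀ G ∈ {G : Fin (2 * k - 1) → Submodule F (Fin (2 * k) → F) |
        ∃ A ∈ T, G = fun j => mapGL A (Fl (j.val + 1))},
    ∀ G' ∈ {G : Fin (2 * k - 1) → Submodule F (Fin (2 * k) → F) |
        ∃ A ∈ T, G = fun j => mapGL A (Fl (j.val + 1))},
      G ≠ G' → ∑ j : Fin (2 * k - 1), subspaceDist (G j) (G' j) = 2 * k ^ 2 :=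
  orbit_flag_code_optimum_distance_of_trivial_stabilizer_general hk Fl hdim hmono T hmax hstab
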